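/- Let π be a group and n a natural number. Let r, s be arbitrary n × n matrices over Λ = MonoidAlgebra (ZMod 2) π. Let σ be a permutation of Fin n and d : Fin n → π, and define matrices r', s' over Λ by r' p q = d(σ p)•(r (σ p) q) and s' q p = (s q (σ p))•(d(σ p))⁻¹. Then for all indices i, j, k ∈ Fin n and all u, v ∈ π, the elements Σ_p r' p i * ⟨u•(s' j p), v•(s' k p)⟩ and Σ_p r p i * ⟨u•(s j p), v•(s k p)⟩ of Λ are congruent modulo T, i.e., they have the same image in the conjugation-coinvariants Λ/T. -/

import Mathlib

/-- The coefficientwise "intersection pairing" `⟨x,y⟩ g = (x g)·(y g)` on the group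
algebra `Λ = MonoidAlgebra (ZMod 2) π`. -/
noncomputable def interPairing {π : Type*} (x y : MonoidAlgebra (ZMod 2) π) :
    MonoidAlgebra (ZMod 2) π :=
  MonoidAlgebra.ofCoeff (Finsupp.zipWith (· * ·) (by simp) x.coeff y.coeff)

/-- The `ZMod 2`-submodule `T ⊆ Λ` spanned by the elements
`single (g*h) 1 − single (h*g) 1`, so that `Λ/T` is the module of coinvariants of
the conjugation action of `π` on `Λ`. -/
noncomputable def conjSub (π : Type*) [Group π] :
    Submodule (ZMod 2) (MonoidAlgebra (ZMod 2) π) :=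
  Submodule.span (ZMod 2)
    {z | ∃ g h : π, z = MonoidAlgebra.single (g * h) 1 - MonoidAlgebra.single (h * g) 1}

lemma interPairing_apply {π : Type*} (x y : MonoidAlgebra (ZMod 2) π) (g : π) :
    (interPairing x y).coeff g = x.coeff g * y.coeff g := rfl

lemma interPairing_mul_single {π : Type*} [Group π] (x y : MonoidAlgebra (ZMod 2) π) (g : π) :
    interPairing (x * MonoidAlgebra.single g 1) (y * MonoidAlgebra.single g 1)
      = interPairing x y * MonoidAlgebra.single g 1 := by
  ext h
  simp [interPairing_apply, MonoidAlgebra.mul_single_apply]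

lemma conj_sub_mem {π : Type*} [Group π] (g : π) (x : MonoidAlgebra (ZMod 2) π) :
    MonoidAlgebra.single g 1 * x * MonoidAlgebra.single g⁻¹ 1 - x ∈ conjSub π := by
  induction x using MonoidAlgebra.induction_on with
  | of h =>
    have hs : MonoidAlgebra.single g 1 * MonoidAlgebra.of (ZMod 2) π h *
        MonoidAlgebra.single g⁻¹ 1 = MonoidAlgebra.single (g * (h * g⁻¹)) 1 := by
      simp [MonoidAlgebra.of_apply, MonoidAlgebra.single_mul_single, mul_assoc]
    rw [hs]
    have ho : (MonoidAlgebra.of (ZMod 2) π h : MonoidAlgebra (ZMod 2) π)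
        = MonoidAlgebra.single ((h * g⁻¹) * g) 1 := by
      simp [MonoidAlgebra.of_apply, mul_assoc]
    rw [ho]
    exact Submodule.subset_span ⟨g, h * g⁻¹, rfl⟩
  | add a b ha hb =>
    have : MonoidAlgebra.single g 1 * (a + b) * MonoidAlgebra.single g⁻¹ 1 - (a + b)
        = (MonoidAlgebra.single g 1 * a * MonoidAlgebra.single g⁻¹ 1 - a)
          + (MonoidAlgebra.single g 1 * b * MonoidAlgebra.single g⁻¹ 1 - b) := by
      noncomm_ring
    rw [this]; exact Submodule.add_mem _ ha hb
  | smul c a ha =>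
    have : MonoidAlgebra.single g 1 * (c • a) * MonoidAlgebra.single g⁻¹ 1 - c • a
        = c • (MonoidAlgebra.single g 1 * a * MonoidAlgebra.single g⁻¹ 1 - a) := by
      simp [smul_sub, mul_smul_comm, smul_mul_assoc]
    rw [this]; exact Submodule.smul_mem _ _ ha

/-- Lemma 5.8 of the paper: the Grassmann cochain is invariant, modulo `T`, under
left multiplication of `r` (and right multiplication of `s`) by a monomial matrix
determined by a permutation `σ` and entries `d p ∈ ±π`. -/
theorem grassmann_cochain_monomial_invariance (π : Type*) [Group π] (n : ℕ)
    (r s : Matrix (Fin n) (Fin n) (MonoidAlgebra (ZMod 2) π))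
    (σ : Equiv.Perm (Fin n)) (d : Fin n → π)
    (r' s' : Matrix (Fin n) (Fin n) (MonoidAlgebra (ZMod 2) π))
    (hr' : ∀ p q, r' p q = MonoidAlgebra.single (d (σ p)) 1 * r (σ p) q)
    (hs' : ∀ q p, s' q p = s q (σ p) * MonoidAlgebra.single (d (σ p))⁻¹ 1)
    (i j k : Fin n) (u v : π) :
    Submodule.Quotient.mk (p := conjSub π)
      (∑ p : Fin n, r' p i *
        interPairing (MonoidAlgebra.single u 1 * s' j p) (MonoidAlgebra.single v 1 * s' k p)) =
    Submodule.Quotient.mk (p := conjSub π)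
      (∑ p : Fin n, r p i *
        interPairing (MonoidAlgebra.single u 1 * s j p) (MonoidAlgebra.single v 1 * s k p)) := by
  have key : ∀ p : Fin n,
      r' p i * interPairing (MonoidAlgebra.single u 1 * s' j p)
        (MonoidAlgebra.single v 1 * s' k p)
      = MonoidAlgebra.single (d (σ p)) 1 *
          (r (σ p) i * interPairing (MonoidAlgebra.single u 1 * s j (σ p))
            (MonoidAlgebra.single v 1 * s k (σ p))) *
          MonoidAlgebra.single (d (σ p))⁻¹ 1 := by
    intro p
    rw [hr', hs', hs', ← mul_assoc (MonoidAlgebra.single u 1), ← mul_assoc (MonoidAlgebra.single v 1),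
      interPairing_mul_single]
    noncomm_ring
  simp only [key]
  rw [← Equiv.sum_comp σ (fun q => r q i * interPairing (MonoidAlgebra.single u 1 * s j q)
      (MonoidAlgebra.single v 1 * s k q))]
  rw [Submodule.Quotient.eq]
  rw [← Finset.sum_sub_distrib]
  exact Submodule.sum_mem _ fun p _ => conj_sub_mem _ _
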